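/- With $u$ as the linearized measure of the superlevel sets of the Green function, one has $\mathbb{E}_o(\tau_A) = \sum_{x\in A} m(x)G^A(x) \le 2\int_0^\infty u(s)\,ds$. -/

import Mathlib

open scoped Classical BigOperators
open MeasureTheory

noncomputable def kerPow {V : Type*} (q : V → V → ℝ) : ℕ → V → V → ℝ
  | 0 => fun x y => if x = y then 1 else 0
  | n + 1 => fun x y => ∑' z, kerPow q n x z * q z y

/-!
The identity is Fubini for the nonnegative double series `∑_k ∑_{x ∈ A} p_A^k(o, x)`.
For the inequality we compare `u` pointwise with a sum of tents instead of evaluating `∫ u`: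
if `0 < s ≤ G^A(x)`, every edge `(x, y)` enters `u(s)` with weight `μ(x, y)` times a fraction
`(G^A(x) - s) / (G^A(x) - G^A(y)) ≥ 1 - s / G^A(x)` (as `G^A(y) ≥ 0`), so the row of `x`
contributes at least `m(x) (1 - s / G^A(x))`, whose integral over `s` is `m(x) G^A(x) / 2`.
-/

open Set

lemma tsum_comm_of_nonneg {α β : Type*} {f : α → β → ℝ} (hf0 : ∀ a b, 0 ≤ f a b)
    (hrow : ∀ a, Summable (f a)) (hsum : Summable fun a => ∑' b, f a b) :
    ∑' a, ∑' b, f a b = ∑' b, ∑' a, f a b :=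
  (Summable.tsum_comm ((summable_prod_of_nonneg fun ab => hf0 ab.1 ab.2).2 ⟨hrow, hsum⟩)).symm

section Kernel

variable {V : Type*} {q : V → V → ℝ}

lemma kerPow_nonneg (hq : ∀ x y, 0 ≤ q x y) : ∀ k x y, 0 ≤ kerPow q k x y
  | 0, x, y => by simp only [kerPow]; positivity
  | k + 1, x, y => tsum_nonneg fun z => mul_nonneg (kerPow_nonneg hq k x z) (hq z y)

lemma summable_tsum_mul_of_substochastic (hq : ∀ x y, 0 ≤ q x y)
    (hqs : ∀ x, Summable (q x)) (hq1 : ∀ x, ∑' y, q x y ≤ 1) {f : V → ℝ}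
    (hf0 : ∀ z, 0 ≤ f z) (hf : Summable f) : Summable fun y => ∑' z, f z * q z y := by
  have h0 : ∀ zy : V × V, 0 ≤ f zy.1 * q zy.1 zy.2 := fun zy => mul_nonneg (hf0 _) (hq _ _)
  have hjoint : Summable fun zy : V × V => f zy.1 * q zy.1 zy.2 := by
    refine (summable_prod_of_nonneg h0).2 ⟨fun z => (hqs z).mul_left (f z), ?_⟩
    refine hf.of_nonneg_of_le (fun z => tsum_nonneg fun y => h0 (z, y)) fun z => ?_
    dsimp only
    rw [tsum_mul_left]
    exact mul_le_of_le_one_right (hf0 z) (hq1 z)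
  exact ((summable_prod_of_nonneg fun yz => h0 yz.swap).1 hjoint.prod_symm).2

lemma summable_kerPow (hq : ∀ x y, 0 ≤ q x y) (hqs : ∀ x, Summable (q x))
    (hq1 : ∀ x, ∑' y, q x y ≤ 1) (o : V) : ∀ k, Summable (kerPow q k o)
  | 0 => summable_of_ne_finset_zero (s := {o}) fun _ hx =>
      if_neg fun h => hx (Finset.mem_singleton.2 h.symm)
  | k + 1 => summable_tsum_mul_of_substochastic hq hqs hq1 (kerPow_nonneg hq k o)
      (summable_kerPow hq hqs hq1 o k)

end Kernel

lemma summable_kerPow_killed {V : Type*} {p : V → V → ℝ} (hp : ∀ x y, 0 ≤ p x y)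
    (hps : ∀ x, Summable (p x)) (hp1 : ∀ x, ∑' y, p x y ≤ 1) (A : Set V) (o : V) (k : ℕ) :
    Summable (kerPow (fun x y => if x ∈ A then p x y else 0) k o) := by
  refine summable_kerPow (fun x y => ?_) (fun x => ?_) (fun x => ?_) o k <;> by_cases hx : x ∈ A
  all_goals simp only [hx, if_true, if_false]
  exacts [hp x y, le_rfl, hps x, summable_zero, hp1 x, by simp]

lemma tsum_tsum_ite_eq_tsum_mul_green {V : Type*} {A : Set V} {K : ℕ → V → ℝ}
    {m G : V → ℝ} (hK0 : ∀ k x, 0 ≤ K k x) (hK : ∀ k, Summable (K k))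
    (hsum : Summable fun k => ∑' x, if x ∈ A then K k x else 0) (hm : ∀ x, m x ≠ 0)
    (hG : ∀ x, G x = if x ∈ A then (∑' k, K k x) / m x else 0) :
    ∑' k, ∑' x, (if x ∈ A then K k x else 0) = ∑' x, if x ∈ A then m x * G x else 0 := by
  have hf0 : ∀ k x, 0 ≤ if x ∈ A then K k x else 0 := fun k x => by
    split_ifs
    exacts [hK0 k x, le_rfl]
  have hrow : ∀ k, Summable fun x => if x ∈ A then K k x else 0 := fun k =>
    (hK k).of_nonneg_of_le (hf0 k) fun x => by split_ifs; exacts [le_rfl, hK0 k x]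
  rw [tsum_comm_of_nonneg hf0 hrow hsum]
  refine tsum_congr fun x => ?_
  rw [hG]
  split_ifs
  exacts [(mul_div_cancel₀ _ (hm x)).symm, tsum_zero]

noncomputable def tent (a : ℝ) : ℝ → ℝ := (Ioc 0 a).indicator fun s => 1 - s / a

lemma integrable_tent (a : ℝ) : Integrable (tent a) :=
  (continuous_const.sub (continuous_id.div_const a)).integrableOn_Ioc.integrable_indicator
    measurableSet_Ioc

lemma integral_tent {a : ℝ} (ha : 0 ≤ a) : ∫ s in Ioi 0, tent a s = a / 2 := by
  rcases ha.eq_or_lt with rfl | ha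
  · simp [tent]
  rw [tent, setIntegral_indicator measurableSet_Ioc,
    inter_eq_self_of_subset_right Ioc_subset_Ioi_self, ← intervalIntegral.integral_of_le ha.le,
    intervalIntegral.integral_sub intervalIntegrable_const
      (intervalIntegral.intervalIntegrable_id.div_const a),
    intervalIntegral.integral_div, integral_id, intervalIntegral.integral_const]
  field_simp
  ring

lemma sum_mul_le_two_mul_integral {ι : Type*} {F : Finset ι} {c G : ι → ℝ} {u : ℝ → ℝ}
    (hG : ∀ x ∈ F, 0 ≤ G x) (hu : IntegrableOn u (Ioi 0))
    (hle : ∀ s ∈ Ioi (0 : ℝ), ∑ x ∈ F, c x * tent (G x) s ≤ u s) :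
    ∑ x ∈ F, c x * G x ≤ 2 * ∫ s in Ioi 0, u s := by
  have hint : ∀ x, Integrable fun s => c x * tent (G x) s :=
    fun x => (integrable_tent _).const_mul _
  calc ∑ x ∈ F, c x * G x = 2 * ∑ x ∈ F, ∫ s in Ioi 0, c x * tent (G x) s := by
        rw [Finset.mul_sum]
        refine Finset.sum_congr rfl fun x hx => ?_
        rw [integral_const_mul, integral_tent (hG x hx)]
        ring
    _ = 2 * ∫ s in Ioi 0, ∑ x ∈ F, c x * tent (G x) s := by
        rw [integral_finsetSum F fun x _ => (hint x).integrableOn]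
    _ ≤ 2 * ∫ s in Ioi 0, u s := by
        gcongr 2 * ?_
        exact setIntegral_mono_on (integrable_finsetSum F fun x _ => hint x).integrableOn hu
          measurableSet_Ioi hle

section LevelSets

variable {V : Type*} (A : Set V) (m : V → ℝ) (p : V → V → ℝ) (G : V → ℝ)

/-- The summand of `u s`: `μ(x, y)` times the fraction of the edge on which the linear
interpolation of `G` is at least `s`. -/
noncomputable def levelEdgeWeight (s : ℝ) (xy : V × V) : ℝ :=
  if xy.1 ∈ A ∧ s ≤ G xy.1 then
    m xy.1 * p xy.1 xy.2 *
      (if s ≤ G xy.2 then 1 else (G xy.1 - max s (G xy.2)) / (G xy.1 - G xy.2))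
  else 0

variable {A m p G}

lemma levelEdgeWeight_nonneg (hm : ∀ x, 0 ≤ m x) (hp : ∀ x y, 0 ≤ p x y) (s : ℝ)
    (xy : V × V) : 0 ≤ levelEdgeWeight A m p G s xy := by
  unfold levelEdgeWeight
  split_ifs with hx hy
  · exact mul_nonneg (mul_nonneg (hm _) (hp _ _)) zero_le_one
  · have hy : G xy.2 < s := not_le.1 hy
    rw [max_eq_left hy.le]
    exact mul_nonneg (mul_nonneg (hm _) (hp _ _))
      (div_nonneg (sub_nonneg.2 hx.2) (sub_nonneg.2 (hy.trans_le hx.2).le))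
  · exact le_rfl

lemma mul_one_sub_div_le_levelEdgeWeight {x y : V} {s : ℝ} (hmp : 0 ≤ m x * p x y)
    (hGy : 0 ≤ G y) (hx : x ∈ A) (hs : 0 ≤ s) (hsx : s ≤ G x) (hGx : 0 < G x) :
    m x * p x y * (1 - s / G x) ≤ levelEdgeWeight A m p G s (x, y) := by
  rw [levelEdgeWeight, if_pos ⟨hx, hsx⟩]
  refine mul_le_mul_of_nonneg_left ?_ hmp
  split_ifs with hsy
  · linarith [div_nonneg hs hGx.le]
  · have hy : G y < s := not_le.1 hsy
    rw [max_eq_left hy.le, one_sub_div hGx.ne']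
    exact div_le_div_of_nonneg_left (sub_nonneg.2 hsx) (by linarith) (by linarith)

lemma mul_tent_le_tsum_levelEdgeWeight (hm : ∀ x, 0 ≤ m x) (hp : ∀ x y, 0 ≤ p x y)
    (hG : ∀ x, 0 ≤ G x) {x : V} (hx : x ∈ A) (hps : Summable (p x)) (hp1 : ∑' y, p x y = 1)
    {s : ℝ} (hs : 0 < s) (hsum : Summable fun y => levelEdgeWeight A m p G s (x, y)) :
    m x * tent (G x) s ≤ ∑' y, levelEdgeWeight A m p G s (x, y) := by
  by_cases hsx : s ≤ G x
  · have hGx : 0 < G x := hs.trans_le hsx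
    calc m x * tent (G x) s = ∑' y, m x * p x y * (1 - s / G x) := by
          rw [tent, indicator_of_mem (show s ∈ Ioc 0 (G x) from ⟨hs, hsx⟩), tsum_mul_right,
            tsum_mul_left, hp1, mul_one]
      _ ≤ ∑' y, levelEdgeWeight A m p G s (x, y) :=
          Summable.tsum_le_tsum (fun y => mul_one_sub_div_le_levelEdgeWeight
            (mul_nonneg (hm x) (hp x y)) (hG y) hx hs.le hsx hGx)
            ((hps.mul_left _).mul_right _) hsum
  · rw [tent, indicator_of_notMem fun h => hsx h.2, mul_zero]
    exact tsum_nonneg fun y => levelEdgeWeight_nonneg hm hp s (x, y)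

lemma sum_mul_tent_le_tsum_levelEdgeWeight (hm : ∀ x, 0 ≤ m x) (hp : ∀ x y, 0 ≤ p x y)
    (hG : ∀ x, 0 ≤ G x) (hps : ∀ x, Summable (p x)) (hp1 : ∀ x, ∑' y, p x y = 1)
    {F : Finset V} (hF : ∀ x ∈ F, x ∈ A) {s : ℝ} (hs : 0 < s)
    (hsum : Summable (levelEdgeWeight A m p G s)) :
    ∑ x ∈ F, m x * tent (G x) s ≤ ∑' xy, levelEdgeWeight A m p G s xy := by
  have h0 := levelEdgeWeight_nonneg (A := A) (G := G) hm hp s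
  rw [hsum.tsum_prod]
  exact (Finset.sum_le_sum fun x hx => mul_tent_le_tsum_levelEdgeWeight hm hp hG (hF x hx)
    (hps x) (hp1 x) hs (hsum.prod_factor x)).trans
    (Summable.sum_le_tsum F (fun x _ => tsum_nonneg fun y => h0 (x, y))
      ((summable_prod_of_nonneg h0).1 hsum).2)

end LevelSets

theorem statement7_general {V : Type*}
    (p : V → V → ℝ) (m : V → ℝ)
    (hp : ∀ x y, 0 ≤ p x y) (hstoch : ∀ x, ∑' y, p x y = 1)
    (hm : ∀ x, 0 < m x)
    (A : Set V) (o : V)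
    (pA : V → V → ℝ) (hpA : ∀ x y, pA x y = if x ∈ A then p x y else 0)
    (GA : V → ℝ)
    (hGA : ∀ x, GA x = if x ∈ A then (∑' k : ℕ, kerPow pA k o x) / m x else 0)
    (Etau : ℝ)
    (hEtau : Etau = ∑' k : ℕ, ∑' x : V, if x ∈ A then kerPow pA k o x else 0)
    (hEsum : Summable fun k : ℕ => ∑' x : V, if x ∈ A then kerPow pA k o x else 0)
    (u : ℝ → ℝ)
    (hu : ∀ s, u s = ∑' xy : V × V,
      if xy.1 ∈ A ∧ s ≤ GA xy.1 then
        m xy.1 * p xy.1 xy.2 *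
          (if s ≤ GA xy.2 then 1
           else (GA xy.1 - max s (GA xy.2)) / (GA xy.1 - GA xy.2))
      else 0)
    (hu_sum : ∀ s, Summable fun xy : V × V =>
      if xy.1 ∈ A ∧ s ≤ GA xy.1 then
        m xy.1 * p xy.1 xy.2 *
          (if s ≤ GA xy.2 then 1
           else (GA xy.1 - max s (GA xy.2)) / (GA xy.1 - GA xy.2))
      else 0)
    (hu_int : IntegrableOn u (Set.Ioi (0 : ℝ))) :
    Etau = (∑' x : V, if x ∈ A then m x * GA x else 0) ∧
      Etau ≤ 2 * ∫ s in Set.Ioi (0 : ℝ), u s := by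
  have hps : ∀ x, Summable (p x) := fun x => by
    by_contra h
    simpa [tsum_eq_zero_of_not_summable h] using hstoch x
  have hpA_eq : pA = fun x y => if x ∈ A then p x y else 0 := funext₂ hpA
  have hK0 : ∀ k x y, 0 ≤ kerPow pA k x y :=
    hpA_eq ▸ kerPow_nonneg fun x y => by split_ifs; exacts [hp x y, le_rfl]
  have hKsum : ∀ k, Summable (kerPow pA k o) :=
    hpA_eq ▸ summable_kerPow_killed hp hps (fun x => (hstoch x).le) A o
  have hGA0 : ∀ x, 0 ≤ GA x := fun x => by
    rw [hGA]
    split_ifs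
    exacts [div_nonneg (tsum_nonneg fun k => hK0 k o x) (hm x).le, le_rfl]
  have hEtau' : Etau = ∑' x, if x ∈ A then m x * GA x else 0 :=
    hEtau.trans <| tsum_tsum_ite_eq_tsum_mul_green (fun k => hK0 k o) hKsum hEsum
      (fun x => (hm x).ne') hGA
  refine ⟨hEtau', hEtau' ▸ Real.tsum_le_of_sum_le (fun x => ?_) fun F => ?_⟩
  · dsimp only
    split_ifs
    exacts [mul_nonneg (hm x).le (hGA0 x), le_rfl]
  rw [← Finset.sum_filter]
  refine sum_mul_le_two_mul_integral (fun x _ => hGA0 x) hu_int fun s hs => ?_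
  rw [hu s]
  exact sum_mul_tent_le_tsum_levelEdgeWeight (fun x => (hm x).le) hp hGA0 hps hstoch
    (fun x hx => (Finset.mem_filter.1 hx).2) hs (hu_sum s)

/-- `E_o(τ_A) = ∑_{x ∈ A} m(x) G^A(x) ≤ 2 ∫_0^∞ u(s) ds`, where `u` is the
linearized measure of the superlevel sets of the killed Green function. -/
theorem statement7 {V : Type*} [Countable V]
    (p : V → V → ℝ) (m : V → ℝ)
    (hp : ∀ x y, 0 ≤ p x y) (hstoch : ∀ x, ∑' y, p x y = 1)
    (hm : ∀ x, 0 < m x) (hrev : ∀ x y, m x * p x y = m y * p y x)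
    (A : Set V) (o : V) (ho : o ∈ A)
    (pA : V → V → ℝ) (hpA : ∀ x y, pA x y = if x ∈ A then p x y else 0)
    (GA : V → ℝ)
    (hGA : ∀ x, GA x = if x ∈ A then (∑' k : ℕ, kerPow pA k o x) / m x else 0)
    (hGfin : ∀ x, Summable fun k : ℕ => kerPow pA k o x)
    (Etau : ℝ)
    (hEtau : Etau = ∑' k : ℕ, ∑' x : V, if x ∈ A then kerPow pA k o x else 0)
    (hEsum : Summable fun k : ℕ => ∑' x : V, if x ∈ A then kerPow pA k o x else 0)
    (hGsum : Summable fun x : V => if x ∈ A then m x * GA x else 0)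
    (u : ℝ → ℝ)
    (hu : ∀ s, u s = ∑' xy : V × V,
      if xy.1 ∈ A ∧ s ≤ GA xy.1 then
        m xy.1 * p xy.1 xy.2 *
          (if s ≤ GA xy.2 then 1
           else (GA xy.1 - max s (GA xy.2)) / (GA xy.1 - GA xy.2))
      else 0)
    (hu_sum : ∀ s, Summable fun xy : V × V =>
      if xy.1 ∈ A ∧ s ≤ GA xy.1 then
        m xy.1 * p xy.1 xy.2 *
          (if s ≤ GA xy.2 then 1
           else (GA xy.1 - max s (GA xy.2)) / (GA xy.1 - GA xy.2))
      else 0)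
    (hu_int : IntegrableOn u (Set.Ioi (0 : ℝ))) :
    Etau = (∑' x : V, if x ∈ A then m x * GA x else 0) ∧
      Etau ≤ 2 * ∫ s in Set.Ioi (0 : ℝ), u s :=
  statement7_general p m hp hstoch hm A o pA hpA GA hGA Etau hEtau hEsum u hu hu_sum hu_int
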